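/- For all symmetric probability measures x1, x3, x4 ∈ X, H(x1 ⊛ (x3 − x4)) + H(x1 ⊠ (x3 − x4)) = H(x3 − x4), where the operations and H are extended bilinearly and linearly to signed measures. -/

import Mathlib

open MeasureTheory Real Filter Topology Polynomial

noncomputable section

/-- The space of finite signed Borel measures on the extended reals `ℝ̄`. -/
abbrev SM := MeasureTheory.SignedMeasure EReal

namespace SCLDPC

/-- The weight `e^{-α/2}` as an extended nonnegative real (`+∞` at `α = -∞`). -/
def wt (α : EReal) : ENNReal :=
  if α = ⊥ then ⊤ else if α = ⊤ then 0 else ENNReal.ofReal (Real.exp (-(α.toReal) / 2))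

/-- A (nonnegative) Borel measure `μ` on `ℝ̄` is symmetric if
`∫_{-E} e^{-α/2} μ(dα) = ∫_{E} e^{-α/2} μ(dα)` for every Borel set `E`
(stated with extended nonnegative integrals, which is equivalent to requiring
equality whenever one of the two sides is finite). -/
def IsSymmMeasure (μ : Measure EReal) : Prop :=
  ∀ E : Set EReal, MeasurableSet E →
    ∫⁻ α in (fun a : EReal => -a) ⁻¹' E, wt α ∂μ = ∫⁻ α in E, wt α ∂μ

/-- Positive part of the Jordan decomposition. -/
def jp (x : SM) : Measure EReal := x.toJordanDecomposition.posPart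

/-- Negative part of the Jordan decomposition. -/
def jn (x : SM) : Measure EReal := x.toJordanDecomposition.negPart

instance (x : SM) : IsFiniteMeasure (jp x) := x.toJordanDecomposition.posPart_finite

instance (x : SM) : IsFiniteMeasure (jn x) := x.toJordanDecomposition.negPart_finite

/-- A finite signed Borel measure on `ℝ̄` is symmetric iff both parts of its Jordan
decomposition are symmetric measures. -/
def IsSymm (x : SM) : Prop := IsSymmMeasure (jp x) ∧ IsSymmMeasure (jn x)

/-- Membership in `X`, the set of symmetric probability measures on `ℝ̄`. -/
def MemX (x : SM) : Prop :=
  (∃ (μ : Measure EReal) (hμ : IsProbabilityMeasure μ),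
      x = (letI := hμ; μ.toSignedMeasure)) ∧ IsSymm x

/-- Membership in `X_d`, the set of differences of symmetric probability measures. -/
def MemXd (y : SM) : Prop := ∃ x1 x2 : SM, MemX x1 ∧ MemX x2 ∧ y = x1 - x2

/-- Integral of a real function against a finite signed measure. -/
def sInt (f : EReal → ℝ) (x : SM) : ℝ := (∫ α, f α ∂(jp x)) - ∫ α, f α ∂(jn x)

/-- `tanh(α/2)` extended continuously to `ℝ̄`. -/
def tanhHalf (α : EReal) : ℝ :=
  if α = ⊤ then 1 else if α = ⊥ then -1 else Real.tanh (α.toReal / 2)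

/-- The inverse hyperbolic tangent on `(-1, 1)`. -/
def artanh (t : ℝ) : ℝ := Real.log ((1 + t) / (1 - t)) / 2

/-- `2 tanh⁻¹(t)` valued in `ℝ̄` (sending `t ≥ 1` to `+∞` and `t ≤ -1` to `-∞`). -/
def atanhTwo (t : ℝ) : EReal :=
  if 1 ≤ t then ⊤ else if t ≤ -1 then ⊥ else ((2 * artanh t : ℝ) : EReal)

/-- Variable-node convolution `⊛` of two (nonnegative) measures:
`(μ ⊛ ν)(E) = ∫ μ(E - α) ν(dα)`, i.e. the pushforward of `μ × ν` under addition. -/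
def mConv (μ ν : Measure EReal) : Measure EReal :=
  (μ.prod ν).map fun p => p.1 + p.2

/-- Check-node convolution `⊠` of two (nonnegative) measures:
`(μ ⊠ ν)(E) = ∫ μ(2 tanh⁻¹(tanh(E/2) / tanh(α/2))) ν(dα)`, where the argument of `μ`
is the image of `E` under `β ↦ 2 tanh⁻¹(tanh(β/2) / tanh(α/2))`; equivalently, the
pushforward of `μ × ν` under `(β, α) ↦ 2 tanh⁻¹(tanh(β/2) · tanh(α/2))`. -/
def mCheck (μ ν : Measure EReal) : Measure EReal :=
  (μ.prod ν).map fun p => atanhTwo (tanhHalf p.1 * tanhHalf p.2)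

instance (μ ν : Measure EReal) [IsFiniteMeasure μ] [IsFiniteMeasure ν] :
    IsFiniteMeasure (mConv μ ν) := by unfold mConv; infer_instance

instance (μ ν : Measure EReal) [IsFiniteMeasure μ] [IsFiniteMeasure ν] :
    IsFiniteMeasure (mCheck μ ν) := by unfold mCheck; infer_instance

/-- The variable-node operation `⊛` extended bilinearly to finite signed measures. -/
def sConv (x y : SM) : SM :=
  (mConv (jp x) (jp y)).toSignedMeasure - (mConv (jp x) (jn y)).toSignedMeasure
    - (mConv (jn x) (jp y)).toSignedMeasure + (mConv (jn x) (jn y)).toSignedMeasure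

/-- The check-node operation `⊠` extended bilinearly to finite signed measures. -/
def sCheck (x y : SM) : SM :=
  (mCheck (jp x) (jp y)).toSignedMeasure - (mCheck (jp x) (jn y)).toSignedMeasure
    - (mCheck (jn x) (jp y)).toSignedMeasure + (mCheck (jn x) (jn y)).toSignedMeasure

/-- The integrand `log₂(1 + e^{-α})` of the entropy functional (with the harmless
convention that it vanishes at `α = ±∞`; symmetric measures put no mass at `-∞`). -/
def entFn (α : EReal) : ℝ :=
  if α = ⊤ then 0 else if α = ⊥ then 0 else Real.logb 2 (1 + Real.exp (-(α.toReal)))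

/-- The entropy functional `H(x) = ∫ log₂(1 + e^{-α}) x(dα)`. -/
def H (x : SM) : ℝ := sInt entFn x

/-!
Write `h(α) = log₂(1 + e^{-α})`. With `u = tanh(α/2)`, `v = tanh(β/2)` one has
`(1 + e^{-(α+β)}) (1 + e^{-2 artanh(uv)}) = (1 + e^{-α}) (1 + e^{-β})`, i.e.
`h(α + β) + h(α ⊠ β) = h(α) + h(β)` for all `α, β > -∞`. Integrating this against `x1 × ν` gives
`H(x1 ⊛ ν) + H(x1 ⊠ ν) = ν(ℝ̄) H(x1) + H(ν)` for both parts `ν` of the Jordan decomposition of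
`x3 - x4`; since `x3 - x4` has total mass zero, the `H(x1)` terms cancel.

Symmetry enters twice: it forbids mass at `-∞`, where the identity fails, and since
`h(α) ≤ (2 / ln 2) e^{-α/2}` it makes `H` finite, as `∫ e^{-α/2}` over `α < 0` equals the
integral over `α > 0`, where the weight is at most `1`.
-/

lemma tanh_half_eq (a : ℝ) : Real.tanh (a / 2) = (1 - exp (-a)) / (1 + exp (-a)) := by
  have h : exp (-a) = exp (-(a / 2)) ^ 2 := by rw [← exp_nat_mul]; ring_nf
  rw [Real.tanh_eq, h, exp_neg]
  field_simp

lemma artanh_eq_real_artanh {t : ℝ} (ht : t ∈ Set.Icc (-1) 1) : artanh t = Real.artanh t := by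
  rw [Real.artanh_eq_half_log ht, artanh]; ring

lemma exp_neg_two_mul_artanh {t : ℝ} (ht : t ∈ Set.Ioo (-1) 1) :
    exp (-(2 * artanh t)) = (1 - t) / (1 + t) := by
  obtain ⟨h1, h2⟩ := ht
  rw [artanh, show -(2 * (log ((1 + t) / (1 - t)) / 2)) = -log ((1 + t) / (1 - t)) by ring,
    exp_neg, exp_log (div_pos (by linarith) (by linarith)), inv_div]

lemma tanh_mul_tanh_mem_Ioo (a b : ℝ) : Real.tanh a * Real.tanh b ∈ Set.Ioo (-1) 1 := by
  rw [Set.mem_Ioo, ← abs_lt, abs_mul]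
  exact mul_lt_one_of_nonneg_of_lt_one_left (abs_nonneg _) (abs_tanh_lt_one a)
    (abs_tanh_lt_one b).le

lemma one_add_exp_neg_add_mul_one_add_exp_neg_atanh (a b : ℝ) :
    (1 + exp (-(a + b))) * (1 + exp (-(2 * artanh (Real.tanh (a / 2) * Real.tanh (b / 2))))) =
      (1 + exp (-a)) * (1 + exp (-b)) := by
  rw [exp_neg_two_mul_artanh (tanh_mul_tanh_mem_Ioo _ _), tanh_half_eq, tanh_half_eq, neg_add,
    exp_add]
  have hx := exp_pos (-a)
  have hy := exp_pos (-b)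
  generalize exp (-a) = x, exp (-b) = y at *
  have hden : 1 + (1 - x) / (1 + x) * ((1 - y) / (1 + y)) =
      2 * (1 + x * y) / ((1 + x) * (1 + y)) := by
    field_simp; ring
  rw [hden]
  field_simp
  ring

@[simp] lemma entFn_top : entFn ⊤ = 0 := rfl

@[simp] lemma entFn_coe (a : ℝ) : entFn a = logb 2 (1 + exp (-a)) := by simp [entFn]

lemma entFn_nonneg (α : EReal) : 0 ≤ entFn α := by
  unfold entFn
  split_ifs
  · rfl
  · rfl
  · exact logb_nonneg one_lt_two (by linarith [exp_pos (-α.toReal)])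

@[simp] lemma tanhHalf_top : tanhHalf ⊤ = 1 := rfl

@[simp] lemma tanhHalf_coe (a : ℝ) : tanhHalf a = Real.tanh (a / 2) := by simp [tanhHalf]

lemma atanhTwo_tanhHalf (α : EReal) : atanhTwo (tanhHalf α) = α := by
  induction α using EReal.rec with
  | bot => simp [atanhTwo, tanhHalf]
  | top => simp [atanhTwo]
  | coe a =>
    rw [tanhHalf_coe, atanhTwo, if_neg (tanh_lt_one _).not_ge,
      if_neg (neg_one_lt_tanh _).not_ge,
      artanh_eq_real_artanh ⟨(neg_one_lt_tanh _).le, (tanh_lt_one _).le⟩, Real.artanh_tanh]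
    exact congrArg _ (by ring)

lemma entFn_add_add_entFn_atanhTwo {α β : EReal} (hα : α ≠ ⊥) (hβ : β ≠ ⊥) :
    entFn (α + β) + entFn (atanhTwo (tanhHalf α * tanhHalf β)) = entFn α + entFn β := by
  induction α using EReal.rec with
  | bot => exact absurd rfl hα
  | top => simp [EReal.top_add_of_ne_bot hβ, atanhTwo_tanhHalf]
  | coe a =>
    induction β using EReal.rec with
    | bot => exact absurd rfl hβ
    | top =>
      rw [EReal.coe_add_top, tanhHalf_top, mul_one, atanhTwo_tanhHalf]
      simp
    | coe b =>
      have hmem := tanh_mul_tanh_mem_Ioo (a / 2) (b / 2)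
      rw [← EReal.coe_add, tanhHalf_coe, tanhHalf_coe, atanhTwo, if_neg hmem.2.not_ge,
        if_neg hmem.1.not_ge]
      simp only [entFn_coe]
      rw [← logb_mul, ← logb_mul, one_add_exp_neg_add_mul_one_add_exp_neg_atanh] <;> positivity

@[fun_prop]
lemma measurable_entFn : Measurable entFn :=
  Measurable.ite (measurableSet_singleton _) measurable_const <|
    Measurable.ite (measurableSet_singleton _) measurable_const (by unfold logb; fun_prop)

@[fun_prop]
lemma measurable_tanhHalf : Measurable tanhHalf := by
  have : Real.tanh = fun x => (exp x - exp (-x)) / (exp x + exp (-x)) := funext Real.tanh_eq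
  refine Measurable.ite (measurableSet_singleton _) measurable_const <|
    Measurable.ite (measurableSet_singleton _) measurable_const ?_
  rw [this]; fun_prop

@[fun_prop]
lemma measurable_atanhTwo : Measurable atanhTwo :=
  Measurable.ite measurableSet_Ici measurable_const <|
    Measurable.ite measurableSet_Iic measurable_const (by unfold artanh; fun_prop)

section Product

lemma ae_prod_ne_bot {μ ν : Measure EReal} (hμ : μ {⊥} = 0) (hν : ν {⊥} = 0) :
    ∀ᵐ p ∂μ.prod ν, p.1 ≠ ⊥ ∧ p.2 ≠ ⊥ := by
  have hne : ∀ {ρ : Measure EReal}, ρ {⊥} = 0 → ∀ᵐ a ∂ρ, a ≠ ⊥ := fun h => by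
    simpa [ae_iff] using h
  exact (Measure.quasiMeasurePreserving_fst.ae (hne hμ)).and
    (Measure.quasiMeasurePreserving_snd.ae (hne hν))

lemma ae_entFn_add_add_entFn_atanhTwo {μ ν : Measure EReal} (hμ : μ {⊥} = 0)
    (hν : ν {⊥} = 0) :
    ∀ᵐ p ∂μ.prod ν, entFn (p.1 + p.2) + entFn (atanhTwo (tanhHalf p.1 * tanhHalf p.2)) =
      entFn p.1 + entFn p.2 :=
  (ae_prod_ne_bot hμ hν).mono fun _ hp => entFn_add_add_entFn_atanhTwo hp.1 hp.2

variable {μ ν : Measure EReal} [IsFiniteMeasure μ] [IsFiniteMeasure ν]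

lemma integrable_entFn_comp_of_ae_le {g : EReal × EReal → EReal} (hg : Measurable g)
    (hμi : Integrable entFn μ) (hνi : Integrable entFn ν)
    (hle : ∀ᵐ p ∂μ.prod ν, entFn (g p) ≤ entFn p.1 + entFn p.2) :
    Integrable (fun p => entFn (g p)) (μ.prod ν) :=
  ((hμi.comp_fst ν).add (hνi.comp_snd μ)).mono' (measurable_entFn.comp hg).aestronglyMeasurable
    (hle.mono fun p hp => by rwa [Real.norm_of_nonneg (entFn_nonneg _)])

lemma integrable_entFn_add (hμ : μ {⊥} = 0) (hν : ν {⊥} = 0)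
    (hμi : Integrable entFn μ) (hνi : Integrable entFn ν) :
    Integrable (fun p : EReal × EReal => entFn (p.1 + p.2)) (μ.prod ν) :=
  integrable_entFn_comp_of_ae_le (by fun_prop) hμi hνi <|
    (ae_entFn_add_add_entFn_atanhTwo hμ hν).mono fun _ hp =>
      hp ▸ le_add_of_nonneg_right (entFn_nonneg _)

lemma integrable_entFn_atanhTwo (hμ : μ {⊥} = 0) (hν : ν {⊥} = 0)
    (hμi : Integrable entFn μ) (hνi : Integrable entFn ν) :
    Integrable (fun p : EReal × EReal => entFn (atanhTwo (tanhHalf p.1 * tanhHalf p.2)))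
      (μ.prod ν) :=
  integrable_entFn_comp_of_ae_le (by fun_prop) hμi hνi <|
    (ae_entFn_add_add_entFn_atanhTwo hμ hν).mono fun _ hp =>
      hp ▸ le_add_of_nonneg_left (entFn_nonneg _)

lemma integrable_entFn_mConv (hμ : μ {⊥} = 0) (hν : ν {⊥} = 0)
    (hμi : Integrable entFn μ) (hνi : Integrable entFn ν) : Integrable entFn (mConv μ ν) :=
  (integrable_map_measure measurable_entFn.aestronglyMeasurable (by fun_prop)).mpr
    (integrable_entFn_add hμ hν hμi hνi)

lemma integrable_entFn_mCheck (hμ : μ {⊥} = 0) (hν : ν {⊥} = 0)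
    (hμi : Integrable entFn μ) (hνi : Integrable entFn ν) : Integrable entFn (mCheck μ ν) :=
  (integrable_map_measure measurable_entFn.aestronglyMeasurable (by fun_prop)).mpr
    (integrable_entFn_atanhTwo hμ hν hμi hνi)

lemma integral_entFn_mConv_add_integral_entFn_mCheck (hμ : μ {⊥} = 0) (hν : ν {⊥} = 0)
    (hμi : Integrable entFn μ) (hνi : Integrable entFn ν) :
    ∫ α, entFn α ∂mConv μ ν + ∫ α, entFn α ∂mCheck μ ν =
      ν.real Set.univ * ∫ α, entFn α ∂μ + μ.real Set.univ * ∫ α, entFn α ∂ν := by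
  rw [mConv, mCheck, integral_map (by fun_prop) measurable_entFn.aestronglyMeasurable,
    integral_map (by fun_prop) measurable_entFn.aestronglyMeasurable,
    ← integral_add (integrable_entFn_add hμ hν hμi hνi)
      (integrable_entFn_atanhTwo hμ hν hμi hνi),
    integral_congr_ae (ae_entFn_add_add_entFn_atanhTwo hμ hν),
    integral_add (hμi.comp_fst ν) (hνi.comp_snd μ), integral_fun_fst, integral_fun_snd,
    smul_eq_mul, smul_eq_mul]

end Product

lemma log_one_add_exp_neg_le (a : ℝ) : log (1 + exp (-a)) ≤ 2 * exp (-a / 2) := by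
  have h : exp (-a) = exp (-a / 2) ^ 2 := by rw [← exp_nat_mul]; ring_nf
  rw [log_le_iff_le_exp (by positivity), h, show 2 * exp (-a / 2) = exp (-a / 2) + exp (-a / 2)
    by ring, exp_add]
  nlinarith [add_one_le_exp (exp (-a / 2)), exp_pos (-a / 2)]

lemma ofReal_entFn_le_mul_wt (α : EReal) :
    ENNReal.ofReal (entFn α) ≤ ENNReal.ofReal (2 / log 2) * wt α := by
  induction α using EReal.rec with
  | bot => simp [wt, ENNReal.mul_top, log_pos one_lt_two]
  | top => simp
  | coe a =>
    simp only [entFn_coe, wt, EReal.coe_ne_bot, EReal.coe_ne_top, if_false, EReal.toReal_coe]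
    rw [← ENNReal.ofReal_mul (by positivity [log_pos one_lt_two])]
    refine ENNReal.ofReal_le_ofReal ?_
    rw [logb, div_mul_eq_mul_div, div_le_div_iff_of_pos_right (log_pos one_lt_two)]
    exact log_one_add_exp_neg_le a

lemma measurable_wt : Measurable wt :=
  Measurable.ite (measurableSet_singleton _) measurable_const <|
    Measurable.ite (measurableSet_singleton _) measurable_const (by fun_prop)

lemma wt_le_one_of_nonneg {α : EReal} (hα : 0 ≤ α) : wt α ≤ 1 := by
  induction α using EReal.rec with
  | bot => simp at hα
  | top => simp [wt]
  | coe a =>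
    simp only [wt, EReal.coe_ne_bot, EReal.coe_ne_top, if_false, EReal.toReal_coe,
      ENNReal.ofReal_le_one, exp_le_one_iff]
    linarith [EReal.coe_nonneg.mp hα]

namespace IsSymmMeasure

variable {μ : Measure EReal}

lemma measure_bot (h : IsSymmMeasure μ) : μ {⊥} = 0 := by
  have h1 := h {⊤} (measurableSet_singleton _)
  have hpre : (fun a : EReal => -a) ⁻¹' {⊤} = {⊥} := by
    ext α; simp
  rw [hpre, lintegral_singleton' measurable_wt, lintegral_singleton' measurable_wt] at h1
  simpa [wt, ENNReal.top_mul] using h1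

lemma lintegral_wt_le (h : IsSymmMeasure μ) : ∫⁻ α, wt α ∂μ ≤ 2 * μ Set.univ := by
  have hle : ∀ E ⊆ Set.Ici (0 : EReal), ∫⁻ α in E, wt α ∂μ ≤ μ Set.univ := fun E hE =>
    calc ∫⁻ α in E, wt α ∂μ ≤ ∫⁻ _ in E, 1 ∂μ := setLIntegral_mono measurable_const fun _ hα =>
          wt_le_one_of_nonneg (hE hα)
      _ ≤ μ Set.univ := by rw [setLIntegral_one]; exact measure_mono (Set.subset_univ _)
  have hneg : (fun a : EReal => -a) ⁻¹' Set.Iio 0 = Set.Ioi 0 := by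
    ext α; simp [EReal.neg_lt_zero]
  rw [← lintegral_add_compl _ measurableSet_Iio, ← h _ measurableSet_Iio, hneg, two_mul]
  exact add_le_add (hle _ Set.Ioi_subset_Ici_self)
    (hle _ fun _ hα => Set.mem_Ici.mpr (not_lt.mp hα))

lemma integrable_entFn [IsFiniteMeasure μ] (h : IsSymmMeasure μ) : Integrable entFn μ := by
  refine ⟨measurable_entFn.aestronglyMeasurable,
    (hasFiniteIntegral_iff_ofReal (ae_of_all _ entFn_nonneg)).mpr ?_⟩
  calc ∫⁻ α, ENNReal.ofReal (entFn α) ∂μ ≤ ∫⁻ α, ENNReal.ofReal (2 / log 2) * wt α ∂μ :=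
        lintegral_mono ofReal_entFn_le_mul_wt
    _ ≤ ENNReal.ofReal (2 / log 2) * (2 * μ Set.univ) := by
        rw [lintegral_const_mul _ measurable_wt]; gcongr; exact h.lintegral_wt_le
    _ < ⊤ := by finiteness

end IsSymmMeasure

section SignedMeasure

variable (μ ν : Measure EReal) [IsFiniteMeasure μ] [IsFiniteMeasure ν]

lemma measure_sub_add_eq_add_sub : μ - ν + ν = μ + (ν - μ) := by
  refine Measure.toSignedMeasure_eq_toSignedMeasure_iff.mp ?_
  rw [Measure.toSignedMeasure_add, Measure.toSignedMeasure_add, eq_comm,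
    ← sub_eq_sub_iff_add_eq_add]
  exact Measure.sub_toSignedMeasure_eq_toSignedMeasure_sub

@[simp] lemma jp_toSignedMeasure_sub : jp (μ.toSignedMeasure - ν.toSignedMeasure) = μ - ν := by
  rw [jp, Measure.toJordanDecomposition_toSignedMeasure_sub]; rfl

@[simp] lemma jn_toSignedMeasure_sub : jn (μ.toSignedMeasure - ν.toSignedMeasure) = ν - μ := by
  rw [jn, Measure.toJordanDecomposition_toSignedMeasure_sub]; rfl

@[simp] lemma jp_toSignedMeasure : jp μ.toSignedMeasure = μ := by
  have := jp_toSignedMeasure_sub μ 0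
  rwa [Measure.toSignedMeasure_zero, sub_zero, Measure.sub_zero] at this

@[simp] lemma jn_toSignedMeasure : jn μ.toSignedMeasure = 0 := by
  have := jn_toSignedMeasure_sub μ 0
  rwa [Measure.toSignedMeasure_zero, sub_zero, Measure.zero_sub] at this

lemma sInt_toSignedMeasure_sub {f : EReal → ℝ} (hμ : Integrable f μ) (hν : Integrable f ν) :
    sInt f (μ.toSignedMeasure - ν.toSignedMeasure) = ∫ α, f α ∂μ - ∫ α, f α ∂ν := by
  have hsum : ∫ α, f α ∂(μ - ν + ν) = ∫ α, f α ∂(μ + (ν - μ)) := by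
    rw [measure_sub_add_eq_add_sub]
  rw [integral_add_measure (hμ.mono_measure Measure.sub_le) hν,
    integral_add_measure hμ (hν.mono_measure Measure.sub_le)] at hsum
  rw [sInt, jp_toSignedMeasure_sub, jn_toSignedMeasure_sub]
  linarith

lemma sConv_toSignedMeasure (y : SM) :
    sConv μ.toSignedMeasure y =
      (mConv μ (jp y)).toSignedMeasure - (mConv μ (jn y)).toSignedMeasure := by
  simp [sConv, mConv]

lemma sCheck_toSignedMeasure (y : SM) :
    sCheck μ.toSignedMeasure y =
      (mCheck μ (jp y)).toSignedMeasure - (mCheck μ (jn y)).toSignedMeasure := by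
  simp [sCheck, mCheck]

lemma apply_eq_measureReal_jp_sub_measureReal_jn (y : SM) {s : Set EReal}
    (hs : MeasurableSet s) :
    y s = (jp y).real s - (jn y).real s := by
  conv_lhs => rw [← y.toSignedMeasure_toJordanDecomposition]
  rw [JordanDecomposition.toSignedMeasure, sub_apply,
    Measure.toSignedMeasure_apply_measurable hs, Measure.toSignedMeasure_apply_measurable hs]
  rfl

end SignedMeasure

lemma MemX.exists_isSymmMeasure {x : SM} (h : MemX x) :
    ∃ (μ : Measure EReal) (_ : IsProbabilityMeasure μ),
      IsSymmMeasure μ ∧ x = μ.toSignedMeasure := by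
  obtain ⟨⟨μ, _, rfl⟩, hsymm, -⟩ := h
  exact ⟨μ, inferInstance, by simpa using hsymm, rfl⟩

theorem H_sConv_add_H_sCheck {μ : Measure EReal} [IsProbabilityMeasure μ] (hμ : μ {⊥} = 0)
    (hμi : Integrable entFn μ) {y : SM} (hp : jp y {⊥} = 0) (hn : jn y {⊥} = 0)
    (hpi : Integrable entFn (jp y)) (hni : Integrable entFn (jn y)) (hy : y Set.univ = 0) :
    H (sConv μ.toSignedMeasure y) + H (sCheck μ.toSignedMeasure y) = H y := by
  have hmass : (jp y).real Set.univ = (jn y).real Set.univ := by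
    linarith [apply_eq_measureReal_jp_sub_measureReal_jn y MeasurableSet.univ]
  have hdualP := integral_entFn_mConv_add_integral_entFn_mCheck hμ hp hμi hpi
  have hdualN := integral_entFn_mConv_add_integral_entFn_mCheck hμ hn hμi hni
  rw [hmass, probReal_univ (μ := μ)] at hdualP
  rw [probReal_univ (μ := μ)] at hdualN
  rw [H, H, H, sConv_toSignedMeasure, sCheck_toSignedMeasure,
    sInt_toSignedMeasure_sub _ _ (integrable_entFn_mConv hμ hp hμi hpi)
      (integrable_entFn_mConv hμ hn hμi hni),
    sInt_toSignedMeasure_sub _ _ (integrable_entFn_mCheck hμ hp hμi hpi)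
      (integrable_entFn_mCheck hμ hn hμi hni), sInt]
  linarith

/-- For all symmetric probability measures `x1, x3, x4 ∈ X`,
`H(x1 ⊛ (x3 - x4)) + H(x1 ⊠ (x3 - x4)) = H(x3 - x4)`. -/
theorem entropy_duality_difference
    (x1 x3 x4 : SM) (h1 : MemX x1) (h3 : MemX x3) (h4 : MemX x4) :
    H (sConv x1 (x3 - x4)) + H (sCheck x1 (x3 - x4)) = H (x3 - x4) := by
  obtain ⟨μ, _, hμ, rfl⟩ := h1.exists_isSymmMeasure
  obtain ⟨μ₃, _, hμ₃, rfl⟩ := h3.exists_isSymmMeasure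
  obtain ⟨μ₄, _, hμ₄, rfl⟩ := h4.exists_isSymmMeasure
  refine H_sConv_add_H_sCheck hμ.measure_bot hμ.integrable_entFn ?_ ?_ ?_ ?_ (by simp)
  all_goals simp only [jp_toSignedMeasure_sub, jn_toSignedMeasure_sub]
  · exact Measure.absolutelyContinuous_of_le Measure.sub_le hμ₃.measure_bot
  · exact Measure.absolutelyContinuous_of_le Measure.sub_le hμ₄.measure_bot
  · exact hμ₃.integrable_entFn.mono_measure Measure.sub_le
  · exact hμ₄.integrable_entFn.mono_measure Measure.sub_le

end SCLDPC
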